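/- arXiv:2304.14542 — 10 statements merged into one kernel-verified Lean document; each statement's English description precedes it below -/
import Mathlib

section
/- Let {h^i}_{i=1}^d ⊆ {0,1}^t be a Gray code for d numbers, and let i', i'', i''+1 ∈ {1,...,d} be three distinct indices. Then there exists a coordinate j ∈ {1,...,t} such that 1 - h^{i'}_j = h^{i''}_j = h^{i''+1}_j. -/
/-! If `y` and `z` agree off one coordinate `k` and `x` differs from both, then `x` cannot
disagree with `y` only where `y` and `z` disagree: otherwise `x` agrees with `y` off `k`,
differs from it at `k`, and, there being only two bits, coincides with `z`. -/

/-- A Gray code for `d` numbers: a sequence `h 0, ..., h (d-1)` of pairwise distinct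
binary vectors in `{0,1}^t` in which every pair of consecutive vectors differs in
exactly one coordinate. -/
def IsGrayCode (d t : ℕ) (h : ℕ → Fin t → Bool) : Prop :=
  (∀ i j, i < d → j < d → i ≠ j → h i ≠ h j) ∧
  (∀ i, i + 1 < d → (Finset.univ.filter fun j => h i j ≠ h (i + 1) j).card = 1)

theorem Function.exists_forall_ne_eq_of_card_filter_ne_eq_one {ι α : Type*} [Fintype ι]
    [DecidableEq α] {y z : ι → α} (h : (Finset.univ.filter fun j => y j ≠ z j).card = 1) :
    ∃ k, ∀ j ≠ k, y j = z j := by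
  obtain ⟨k, hk⟩ := Finset.card_eq_one.mp h
  refine ⟨k, fun j hj => by_contra fun hne => hj ?_⟩
  have hmem : j ∈ Finset.univ.filter fun j => y j ≠ z j := by simpa using hne
  simpa [hk] using hmem

theorem Bool.exists_ne_and_eq_of_forall_ne_eq {ι : Type*} {x y z : ι → Bool} (k : ι)
    (hyz : ∀ j ≠ k, y j = z j) (hxy : x ≠ y) (hxz : x ≠ z) :
    ∃ j, x j ≠ y j ∧ y j = z j := by
  by_contra! H
  have hxy_off : ∀ j ≠ k, x j = y j := fun j hj => by_contra fun hne => H j hne (hyz j hj)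
  have hxy_k : x k ≠ y k := by
    refine fun heq => hxy (funext fun j => ?_)
    by_cases hj : j = k
    · exact hj ▸ heq
    · exact hxy_off j hj
  have hyz_k : y k ≠ z k := H k hxy_k
  refine hxz (funext fun j => ?_)
  by_cases hj : j = k
  · subst hj
    revert hxy_k hyz_k
    cases x j <;> cases y j <;> cases z j <;> decide
  · exact (hxy_off j hj).trans (hyz j hj)

/-- If `i'`, `i''`, `i''+1` are three distinct indices of a Gray code, then there is a
coordinate `j` with `1 - h^{i'}_j = h^{i''}_j = h^{i''+1}_j`. -/
theorem gray_code_three_indices (d t : ℕ) (h : ℕ → Fin t → Bool)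
    (hg : IsGrayCode d t h) (i' i'' : ℕ) (h1 : i' < d) (h2 : i'' + 1 < d)
    (h3 : i' ≠ i'') (h4 : i' ≠ i'' + 1) :
    ∃ j : Fin t, h i' j ≠ h i'' j ∧ h i'' j = h (i'' + 1) j := by
  obtain ⟨hdistinct, hstep⟩ := hg
  obtain ⟨k, hk⟩ := Function.exists_forall_ne_eq_of_card_filter_ne_eq_one (hstep i'' h2)
  exact Bool.exists_ne_and_eq_of_forall_ne_eq k hk
    (hdistinct i' i'' h1 (Nat.lt_of_succ_lt h2) h3) (hdistinct i' (i'' + 1) h1 h2 h4)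
end

section
/- Let {h^i}_{i=1}^d ⊆ {0,1}^t be a Gray code for d numbers, and let i', i'' ∈ {1,...,d-1} be two indices with |i' - i''| ≥ 2. Then there exists a coordinate j ∈ {1,...,t} such that 1 - h^{i'}_j = 1 - h^{i'+1}_j = h^{i''}_j = h^{i''+1}_j. -/
/-!
Write `x, y` for the vectors at `i', i' + 1`, flipped at `j₁`, and `u, v` for those at
`i'', i'' + 1`, flipped at `j₂`. If no coordinate as claimed exists, then `x` and `u` agree
outside `{j₁, j₂}`. Pick `p ∈ {x, y}` agreeing with `u` at `j₁`, then `q ∈ {u, v}` agreeing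
with `p` at `j₂`; then `p = q`, contradicting that the four vectors are distinct.
-/

theorem IsGrayCode.exists_flip {d t : ℕ} {h : ℕ → Fin t → Bool} (hg : IsGrayCode d t h)
    {i : ℕ} (hi : i + 1 < d) : ∃ j₀, ∀ j, h i j ≠ h (i + 1) j ↔ j = j₀ := by
  obtain ⟨j₀, hj₀⟩ := Finset.card_eq_one.mp (hg.2 i hi)
  exact ⟨j₀, fun j => by simpa using Finset.ext_iff.mp hj₀ j⟩

section Flip

variable {ι : Type*} {x y : ι → Bool} {j₀ : ι}

theorem exists_eq_or_eq_of_flip (hxy : ∀ j, x j ≠ y j ↔ j = j₀) (b : Bool) :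
    ∃ p, (p = x ∨ p = y) ∧ p j₀ = b ∧ ∀ j, j ≠ j₀ → p j = x j := by
  by_cases hb : x j₀ = b
  · exact ⟨x, .inl rfl, hb, fun _ _ => rfl⟩
  · refine ⟨y, .inr rfl, ?_, fun j hj => not_not.mp ((hxy j).not.mpr hj) |>.symm⟩
    have := (hxy j₀).mpr rfl
    cases b <;> cases hx : x j₀ <;> simp_all

theorem exists_ne_of_flip {u v : ι → Bool} {j₁ j₂ : ι}
    (hxy : ∀ j, x j ≠ y j ↔ j = j₁) (huv : ∀ j, u j ≠ v j ↔ j = j₂)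
    (hxu : x ≠ u) (hxv : x ≠ v) (hyu : y ≠ u) (hyv : y ≠ v) :
    ∃ j, x j ≠ u j ∧ x j = y j ∧ u j = v j := by
  by_contra! hc
  have agree : ∀ j, j ≠ j₁ → j ≠ j₂ → x j = u j := fun j hj₁ hj₂ => by
    by_contra hne
    exact (huv j).not.mpr hj₂ (hc j hne (not_not.mp ((hxy j).not.mpr hj₁)))
  obtain ⟨p, hp, hpj₁, hpx⟩ := exists_eq_or_eq_of_flip hxy (u j₁)
  obtain ⟨q, hq, hqj₂, hqu⟩ := exists_eq_or_eq_of_flip huv (p j₂)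
  have hpq : p = q := by
    funext j
    by_cases hj₂ : j = j₂
    · exact hj₂ ▸ hqj₂.symm
    rw [hqu j hj₂]
    by_cases hj₁ : j = j₁
    · exact hj₁ ▸ hpj₁
    rw [hpx j hj₁, agree j hj₁ hj₂]
  rcases hp with rfl | rfl <;> rcases hq with rfl | rfl <;> contradiction

end Flip

/-- If `i'` and `i''` index consecutive pairs of a Gray code with `|i' - i''| ≥ 2`, there
is a coordinate `j` with `1 - h^{i'}_j = 1 - h^{i'+1}_j = h^{i''}_j = h^{i''+1}_j`. -/
theorem gray_code_four_indices (d t : ℕ) (h : ℕ → Fin t → Bool)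
    (hg : IsGrayCode d t h) (i' i'' : ℕ) (h1 : i' + 1 < d) (h2 : i'' + 1 < d)
    (h3 : i' + 2 ≤ i'' ∨ i'' + 2 ≤ i') :
    ∃ j : Fin t, h i' j ≠ h i'' j ∧ h i' j = h (i' + 1) j ∧ h i'' j = h (i'' + 1) j := by
  obtain ⟨j₁, hj₁⟩ := hg.exists_flip h1
  obtain ⟨j₂, hj₂⟩ := hg.exists_flip h2
  exact exists_ne_of_flip hj₁ hj₂ (hg.1 _ _ (by omega) (by omega) (by omega))
    (hg.1 _ _ (by omega) (by omega) (by omega)) (hg.1 _ _ (by omega) (by omega) (by omega))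
    (hg.1 _ _ (by omega) (by omega) (by omega))
end

section
/- Given a reversed edge ranking φ of the path graph P_n (with vertices v_1,...,v_n and edges v_{i-1}v_i) using r ranks, define binary vectors h^1,...,h^n ∈ {0,1}^r by h^1 = 0 and, for i ≥ 2 and each j ∈ {1,...,r}: h^i_j = 1 - h^{i-1}_j if φ(v_{i-1}v_i) = j, and h^i_j = h^{i-1}_j otherwise. Then {h^i}_{i=1}^n is a Gray code for n numbers: the vectors are pairwise distinct and each consecutive pair differs in exactly one coordinate. -/
/-- A reversed edge ranking of the path graph `P_n` (vertices `0,...,n-1`, where edge `e`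
joins vertices `e` and `e+1`) using ranks `{1,...,r}`: between any two equal-labeled
edges there is an edge with strictly smaller label. -/
def IsRevEdgeRanking (n r : ℕ) (φ : ℕ → ℕ) : Prop :=
  (∀ e, e + 1 < n → 1 ≤ φ e ∧ φ e ≤ r) ∧
  (∀ e₁ e₂, e₁ + 1 < n → e₂ + 1 < n → e₁ < e₂ → φ e₁ = φ e₂ →
    ∃ e₃, e₁ < e₃ ∧ e₃ < e₂ ∧ φ e₃ < φ e₁)

/-- From a reversed edge ranking `φ` of `P_n` with `r` ranks, the vectors defined by
`h^1 = 0` and `h^{i+1}_j = 1 - h^i_j` if `φ(v_i v_{i+1}) = j`, `h^{i+1}_j = h^i_j`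
otherwise, form a Gray code for `n` numbers. -/
theorem revEdgeRanking_gives_grayCode (n r : ℕ) (φ : ℕ → ℕ)
    (hφ : IsRevEdgeRanking n r φ) (h : ℕ → Fin r → Bool)
    (h0 : ∀ j, h 0 j = false)
    (hrec : ∀ i, i + 1 < n → ∀ j : Fin r,
      h (i + 1) j = if φ i = (j : ℕ) + 1 then !(h i j) else h i j) :
    IsGrayCode n r h := by
  obtain ⟨hrange, hrank⟩ := hφ
  -- parity characterization
  have key : ∀ a b, a ≤ b → b < n → ∀ j : Fin r,
      h b j = xor (decide (Odd ((Finset.Ico a b).filter (fun e => φ e = (j:ℕ)+1)).card)) (h a j) := by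
    intro a b hab hbn
    induction b with
    | zero =>
      intro j
      have : a = 0 := Nat.le_zero.mp hab
      subst this; simp
    | succ b ih =>
      intro j
      rcases Nat.lt_or_ge a (b+1) with hlt | hge
      · have hab' : a ≤ b := Nat.lt_succ_iff.mp hlt
        have hbn' : b < n := Nat.lt_of_succ_lt hbn
        have hico : Finset.Ico a (b+1) = insert b (Finset.Ico a b) := by
          rw [Finset.Ico_add_one_right_eq_Icc, ← Finset.Ico_insert_right hab']
        have hnotmem : b ∉ Finset.Ico a b := by simp
        have hr := hrec b hbn j
        have ihj := ih hab' hbn' j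
        rw [hico, Finset.filter_insert]
        by_cases hc : φ b = (j:ℕ)+1
        · rw [if_pos hc]
          rw [Finset.card_insert_of_notMem (by simp)]
          rw [hr, if_pos hc, ihj]
          simp only [Nat.odd_add_one, decide_not, Bool.not_xor]
        · rw [if_neg hc, hr, if_neg hc, ihj]
      · have : a = b+1 := le_antisymm hab hge
        subst this; simp
  constructor
  · -- distinctness
    have main : ∀ i j, i < j → j < n → h i ≠ h j := by
      intro i j hij hjn
      have hne : ((Finset.Ico i j).image φ).Nonempty := by
        simp [Finset.Nonempty, Finset.mem_image]
        exact ⟨i, le_refl i, hij⟩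
      set m := ((Finset.Ico i j).image φ).min' hne with hm
      have hmem : m ∈ (Finset.Ico i j).image φ := Finset.min'_mem _ _
      obtain ⟨e0, he0, he0m⟩ := Finset.mem_image.mp hmem
      obtain ⟨hie0, he0j⟩ := Finset.mem_Ico.mp he0
      have hedge : ∀ e, e ∈ Finset.Ico i j → e + 1 < n := by
        intro e he
        obtain ⟨_, hej⟩ := Finset.mem_Ico.mp he
        omega
      have hmin : ∀ e ∈ Finset.Ico i j, m ≤ φ e := by
        intro e he
        exact Finset.min'_le _ _ (Finset.mem_image_of_mem φ he)
      have hrg := hrange e0 (hedge e0 he0)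
      rw [he0m] at hrg
      -- the filter is exactly {e0}
      have hfilt : (Finset.Ico i j).filter (fun e => φ e = m) = {e0} := by
        apply Finset.eq_singleton_iff_unique_mem.mpr
        constructor
        · exact Finset.mem_filter.mpr ⟨he0, he0m⟩
        · intro e he
          obtain ⟨heIco, heφ⟩ := Finset.mem_filter.mp he
          by_contra hne'
          rcases Nat.lt_or_ge e e0 with hlt | hge
          · obtain ⟨e3, h1, h2, h3⟩ := hrank e e0 (hedge e heIco) (hedge e0 he0) hlt
              (heφ.trans he0m.symm)
            have he3 : e3 ∈ Finset.Ico i j := by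
              obtain ⟨hi1, _⟩ := Finset.mem_Ico.mp heIco
              exact Finset.mem_Ico.mpr ⟨by omega, by omega⟩
            have := hmin e3 he3
            omega
          · have hlt : e0 < e := by omega
            obtain ⟨e3, h1, h2, h3⟩ := hrank e0 e (hedge e0 he0) (hedge e heIco) hlt
              (he0m.trans heφ.symm)
            have he3 : e3 ∈ Finset.Ico i j := by
              obtain ⟨_, hj1⟩ := Finset.mem_Ico.mp heIco
              exact Finset.mem_Ico.mpr ⟨by omega, by omega⟩
            have := hmin e3 he3
            rw [he0m] at h3
            omega
      set jc : Fin r := ⟨m - 1, by omega⟩ with hjc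
      have hjm : (jc : ℕ) + 1 = m := by simp [hjc]; omega
      intro heq
      have hk := key i j (le_of_lt hij) hjn jc
      rw [heq] at hk
      rw [hjm, hfilt] at hk
      simp at hk
  -- back to symmetric distinctness
    intro i j hin hjn hij
    rcases Nat.lt_or_ge i j with hlt | hge
    · exact main i j hlt hjn
    · have hlt : j < i := by omega
      exact fun heq => (main j i hlt hin) heq.symm
  · -- consecutive difference
    intro i hin
    have hrg := hrange i hin
    have : (Finset.univ.filter fun j : Fin r => h i j ≠ h (i+1) j) = {⟨φ i - 1, by omega⟩} := by
      ext j
      simp only [Finset.mem_filter, Finset.mem_univ, true_and, Finset.mem_singleton]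
      rw [hrec i hin j]
      constructor
      · intro hne
        by_cases hc : φ i = (j:ℕ)+1
        · apply Fin.ext; simp; omega
        · rw [if_neg hc] at hne; exact absurd rfl hne
      · intro hj
        subst hj
        have hc : φ i = (⟨φ i - 1, by omega⟩ : Fin r) + 1 := by simp; omega
        rw [if_pos hc]
        cases h i ⟨φ i - 1, by omega⟩ <;> simp
    rw [this, Finset.card_singleton]
end

section
/- If CDC(𝒮) is a generalized 1D-ordered combinatorial disjunctive constraint, then every minimal infeasible set with respect to CDC(𝒮) has cardinality at most 2; equivalently, CDC(𝒮) is pairwise IB-representable. -/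
/-!
If `A` had three distinct elements `a, b, c`, the sets `A \ {a}`, `A \ {b}`, `A \ {c}` would be
feasible, say inside `S i`, `S j`, `S k`. Any two of these sets cover `A`, so infeasibility of `A`
forces `i, j, k` to be pairwise distinct; any two of them share an element of `A`, so the
ordering forces `i, j, k` to be pairwise at distance at most one. No three natural numbers do both.
-/

open Finset

section

variable {α : Type*} [DecidableEq α] {d : ℕ} {S : ℕ → Finset α}

lemma le_add_one_of_mem_of_mem (hord : ∀ i j, i < d → j < d → i + 2 ≤ j → S i ∩ S j = ∅)
    {p q : ℕ} (hp : p < d) (hq : q < d) {x : α} (hxp : x ∈ S p) (hxq : x ∈ S q) :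
    p ≤ q + 1 := by
  by_contra! h
  have hx : x ∈ S q ∩ S p := mem_inter.2 ⟨hxq, hxp⟩
  simp [hord q p hq hp (by omega)] at hx

lemma adjacent_of_erase_subset (hord : ∀ i j, i < d → j < d → i + 2 ≤ j → S i ∩ S j = ∅)
    {A : Finset α} {p q : ℕ} (hp : p < d) (hq : q < d) (hAp : ¬ A ⊆ S p) {x y z : α}
    (hx : x ∈ A) (hz : z ∈ A) (hxy : x ≠ y) (hxz : x ≠ z) (hyz : y ≠ z)
    (hxp : A.erase x ⊆ S p) (hyq : A.erase y ⊆ S q) :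
    p = q + 1 ∨ q = p + 1 := by
  have hpq : p ≠ q := by
    rintro rfl
    exact hAp ((erase_subset_iff_of_mem (hyq (mem_erase.2 ⟨hxy, hx⟩))).1 hxp)
  have hzp : z ∈ S p := hxp (mem_erase.2 ⟨hxz.symm, hz⟩)
  have hzq : z ∈ S q := hyq (mem_erase.2 ⟨hyz.symm, hz⟩)
  have := le_add_one_of_mem_of_mem hord hp hq hzp hzq
  have := le_add_one_of_mem_of_mem hord hq hp hzq hzp
  omega

end

theorem g1d_minimal_infeasible_card_le_two_general {α : Type*} [DecidableEq α]
    (d : ℕ) (S : ℕ → Finset α)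
    (hord : ∀ i j, i < d → j < d → i + 2 ≤ j → S i ∩ S j = ∅)
    (A : Finset α)
    (hinf : ¬ ∃ i, i < d ∧ A ⊆ S i)
    (hmin : ∀ B ⊂ A, ∃ i, i < d ∧ B ⊆ S i) :
    A.card ≤ 2 := by
  by_contra! hcard
  obtain ⟨a, b, c, ha, hb, hc, hab, hac, hbc⟩ := two_lt_card_iff.1 hcard
  obtain ⟨i, hi, hai⟩ := hmin (A.erase a) (erase_ssubset ha)
  obtain ⟨j, hj, hbj⟩ := hmin (A.erase b) (erase_ssubset hb)
  obtain ⟨k, hk, hck⟩ := hmin (A.erase c) (erase_ssubset hc)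
  have hAi : ¬ A ⊆ S i := fun h => hinf ⟨i, hi, h⟩
  have hAj : ¬ A ⊆ S j := fun h => hinf ⟨j, hj, h⟩
  have := adjacent_of_erase_subset hord hi hj hAi ha hc hab hac hbc hai hbj
  have := adjacent_of_erase_subset hord hi hk hAi ha hb hac hab hbc.symm hai hck
  have := adjacent_of_erase_subset hord hj hk hAj hb ha hbc hab.symm hac.symm hbj hck
  omega

/-- Every minimal infeasible set of a generalized 1D-ordered CDC has cardinality
at most 2 (hence the CDC is pairwise IB-representable).  Here `S 0, ..., S (d-1)`
is a generalized 1D-ordered family: `S i ∩ S j = ∅` whenever `|i - j| ≥ 2`;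
`A` is an infeasible subset of the ground set all of whose proper subsets are
feasible. -/
theorem g1d_minimal_infeasible_card_le_two {α : Type*} [DecidableEq α]
    (d : ℕ) (S : ℕ → Finset α)
    (hord : ∀ i j, i < d → j < d → i + 2 ≤ j → S i ∩ S j = ∅)
    (A : Finset α) (hA : A ⊆ (Finset.range d).biUnion S)
    (hinf : ¬ ∃ i, i < d ∧ A ⊆ S i)
    (hmin : ∀ B ⊂ A, ∃ i, i < d ∧ B ⊆ S i) :
    A.card ≤ 2 :=
  g1d_minimal_infeasible_card_le_two_general d S hord A hinf hmin
end

section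
/- If CDC(𝒮) is a generalized nD-ordered combinatorial disjunctive constraint, then every minimal infeasible set with respect to CDC(𝒮) has cardinality at most 2. Specifically, if I is an infeasible set with |I| ≥ 3 such that every proper subset of I is feasible, a contradiction arises: there exists a grid index 𝐢' with I ⊆ S^{𝐢'}. -/
/-- `v` lies in the grid `[d₁] × ⋯ × [dₙ]`. -/
def InGrid (n : ℕ) (dv : Fin n → ℕ) (v : Fin n → ℕ) : Prop :=
  ∀ j, 1 ≤ v j ∧ v j ≤ dv j

/-- The ℓ¹ distance between two grid indices. -/
def l1dist (n : ℕ) (a b : Fin n → ℕ) : ℕ :=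
  ∑ j : Fin n, ((a j : ℤ) - (b j : ℤ)).natAbs

/-!
Take three elements `r, s, t` of a minimal infeasible set `A` and grid indices `𝐢_r, 𝐢_s, 𝐢_t`
with `A \ {x} ⊆ S^{𝐢_x}`. Their coordinatewise median `𝐯` lies in the grid and on an ℓ¹-geodesic
between any two of them, so by (2) each pairwise intersection `S^{𝐢_x} ∩ S^{𝐢_y}` lies in `S^𝐯`.
Every element of `A` is missed by at most one of the three sets, hence `A ⊆ S^𝐯`: `A` is feasible.
-/

theorem Finset.subset_of_erase_subset_of_inter_subset {α : Type*} [DecidableEq α]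
    {A P Q R V : Finset α} {r s t : α} (hrs : r ≠ s) (hrt : r ≠ t) (hst : s ≠ t)
    (hP : A.erase r ⊆ P) (hQ : A.erase s ⊆ Q) (hR : A.erase t ⊆ R)
    (hPQ : P ∩ Q ⊆ V) (hQR : Q ∩ R ⊆ V) (hRP : R ∩ P ⊆ V) : A ⊆ V := by
  intro a ha
  have mem_of_ne {x : α} {X : Finset α} (hX : A.erase x ⊆ X) (hax : a ≠ x) : a ∈ X :=
    hX (Finset.mem_erase.mpr ⟨hax, ha⟩)
  by_cases har : a = r
  · subst har
    exact hQR (Finset.mem_inter.mpr ⟨mem_of_ne hQ hrs, mem_of_ne hR hrt⟩)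
  by_cases has : a = s
  · subst has
    exact hRP (Finset.mem_inter.mpr ⟨mem_of_ne hR hst, mem_of_ne hP har⟩)
  · exact hPQ (Finset.mem_inter.mpr ⟨mem_of_ne hP har, mem_of_ne hQ has⟩)

def gridMedian {n : ℕ} (i j k : Fin n → ℕ) : Fin n → ℕ :=
  i ⊓ j ⊔ j ⊓ k ⊔ k ⊓ i

section gridMedian

variable {n : ℕ} (i j k : Fin n → ℕ)

theorem gridMedian_apply (l : Fin n) :
    gridMedian i j k l = max (max (min (i l) (j l)) (min (j l) (k l))) (min (k l) (i l)) :=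
  rfl

theorem gridMedian_rotate : gridMedian i j k = gridMedian j k i := by
  unfold gridMedian; ac_rfl

theorem l1dist_add_l1dist_gridMedian :
    l1dist n i (gridMedian i j k) + l1dist n (gridMedian i j k) j = l1dist n i j := by
  unfold l1dist
  rw [← Finset.sum_add_distrib]
  refine Finset.sum_congr rfl fun l _ => ?_
  rw [gridMedian_apply]
  omega

end gridMedian

theorem InGrid.gridMedian {n : ℕ} {dv i j k : Fin n → ℕ} (hi : InGrid n dv i)
    (hj : InGrid n dv j) (hk : InGrid n dv k) : InGrid n dv (gridMedian i j k) := by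
  intro l
  have := hi l; have := hj l; have := hk l
  rw [gridMedian_apply]
  omega

theorem gnd_minimal_infeasible_card_le_two_general {α : Type*} [DecidableEq α]
    (n : ℕ) (dv : Fin n → ℕ) (S : (Fin n → ℕ) → Finset α)
    (h2 : ∀ i j v, InGrid n dv i → InGrid n dv j → InGrid n dv v →
      l1dist n i v + l1dist n v j = l1dist n i j → S i ∩ S j ⊆ S v)
    (A : Finset α)
    (hinf : ¬ ∃ i, InGrid n dv i ∧ A ⊆ S i)
    (hmin : ∀ B ⊂ A, ∃ i, InGrid n dv i ∧ B ⊆ S i) :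
    A.card ≤ 2 := by
  by_contra! hcard
  obtain ⟨r, hr, s, hs, t, ht, hrs, hrt, hst⟩ := Finset.two_lt_card.mp hcard
  obtain ⟨ir, hir, hSr⟩ := hmin (A.erase r) (Finset.erase_ssubset hr)
  obtain ⟨is, his, hSs⟩ := hmin (A.erase s) (Finset.erase_ssubset hs)
  obtain ⟨it, hit, hSt⟩ := hmin (A.erase t) (Finset.erase_ssubset ht)
  have inter_subset_median {i j k} (hi : InGrid n dv i) (hj : InGrid n dv j) (hk : InGrid n dv k) :
      S i ∩ S j ⊆ S (gridMedian i j k) :=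
    h2 i j _ hi hj (hi.gridMedian hj hk) (l1dist_add_l1dist_gridMedian i j k)
  refine hinf ⟨gridMedian ir is it, hir.gridMedian his hit,
    Finset.subset_of_erase_subset_of_inter_subset hrs hrt hst hSr hSs hSt ?_ ?_ ?_⟩
  · exact inter_subset_median hir his hit
  · rw [gridMedian_rotate]
    exact inter_subset_median his hit hir
  · rw [gridMedian_rotate, gridMedian_rotate]
    exact inter_subset_median hit hir his

/-- Every minimal infeasible set of a generalized nD-ordered CDC has cardinality at
most 2.  The family satisfies: (1) `S 𝐢 ∩ S 𝐣 = ∅` when `‖𝐢 - 𝐣‖_∞ ≥ 2`;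
(2) `S 𝐢 ∩ S 𝐣 ⊆ S 𝐯` when `‖𝐢 - 𝐯‖₁ + ‖𝐯 - 𝐣‖₁ = ‖𝐢 - 𝐣‖₁`.  If `A` is an
infeasible set (contained in the ground set) all of whose proper subsets are
feasible, then `|A| ≤ 2`. -/
theorem gnd_minimal_infeasible_card_le_two {α : Type*} [DecidableEq α]
    (n : ℕ) (dv : Fin n → ℕ) (S : (Fin n → ℕ) → Finset α)
    (h1 : ∀ i j, InGrid n dv i → InGrid n dv j →
      (∃ k, 2 ≤ ((i k : ℤ) - (j k : ℤ)).natAbs) → S i ∩ S j = ∅)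
    (h2 : ∀ i j v, InGrid n dv i → InGrid n dv j → InGrid n dv v →
      l1dist n i v + l1dist n v j = l1dist n i j → S i ∩ S j ⊆ S v)
    (A : Finset α)
    (hA : ∀ a ∈ A, ∃ i, InGrid n dv i ∧ a ∈ S i)
    (hinf : ¬ ∃ i, InGrid n dv i ∧ A ⊆ S i)
    (hmin : ∀ B ⊂ A, ∃ i, InGrid n dv i ∧ B ⊆ S i) :
    A.card ≤ 2 :=
  gnd_minimal_infeasible_card_le_two_general n dv S h2 A hinf hmin
end

section
/- Let 𝒮 = {S^i}_{i=1}^d be a generalized 1D-ordered family and {h^i}_{i=1}^d ⊆ {0,1}^t a Gray code. For each j ∈ {1,...,t}, set L^j = (∪_{i: h^i_j=0} S^i) \ (∪_{i: h^i_j=1} S^i) and R^j = (∪_{i: h^i_j=1} S^i) \ (∪_{i: h^i_j=0} S^i). Then for every j and every u ∈ L^j, v ∈ R^j, the pair {u,v} is not contained in any S^i. -/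
/-- `L^j`: elements lying in some piece indexed where `h_j = 0` but in no piece
indexed where `h_j = 1`. -/
def Lset {α : Type*} [DecidableEq α] (d t : ℕ) (S : ℕ → Finset α)
    (h : ℕ → Fin t → Bool) (j : Fin t) : Finset α :=
  ((Finset.range d).filter fun i => h i j = false).biUnion S \
    ((Finset.range d).filter fun i => h i j = true).biUnion S

/-- `R^j`: elements lying in some piece indexed where `h_j = 1` but in no piece
indexed where `h_j = 0`. -/
def Rset {α : Type*} [DecidableEq α] (d t : ℕ) (S : ℕ → Finset α)
    (h : ℕ → Fin t → Bool) (j : Fin t) : Finset α :=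
  ((Finset.range d).filter fun i => h i j = true).biUnion S \
    ((Finset.range d).filter fun i => h i j = false).biUnion S

section

variable {α : Type*} [DecidableEq α] {d t : ℕ} {S : ℕ → Finset α} {h : ℕ → Fin t → Bool}
  {j : Fin t} {i : ℕ}

theorem notMem_of_mem_Lset {u : α} (hu : u ∈ Lset d t S h j) (hi : i < d)
    (hij : h i j = true) : u ∉ S i := fun hui =>
  (Finset.mem_sdiff.1 hu).2 <|
    Finset.mem_biUnion.2 ⟨i, Finset.mem_filter.2 ⟨Finset.mem_range.2 hi, hij⟩, hui⟩

theorem notMem_of_mem_Rset {v : α} (hv : v ∈ Rset d t S h j) (hi : i < d)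
    (hij : h i j = false) : v ∉ S i := fun hvi =>
  (Finset.mem_sdiff.1 hv).2 <|
    Finset.mem_biUnion.2 ⟨i, Finset.mem_filter.2 ⟨Finset.mem_range.2 hi, hij⟩, hvi⟩

end

theorem gray_code_biclique_general {α : Type*} [DecidableEq α] (d t : ℕ)
    (S : ℕ → Finset α)
    (h : ℕ → Fin t → Bool)
    (j : Fin t) (u v : α)
    (hu : u ∈ Lset d t S h j) (hv : v ∈ Rset d t S h j) :
    ∀ i, i < d → ¬ (u ∈ S i ∧ v ∈ S i) := by
  rintro i hi ⟨hui, hvi⟩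
  cases hij : h i j with
  | false => exact notMem_of_mem_Rset hv hi hij hvi
  | true => exact notMem_of_mem_Lset hu hi hij hui

/-- For a generalized 1D-ordered family and a Gray code, each `{L^j, R^j}` is a
biclique in the conflict graph: no `S i` contains both an element of `L^j` and an
element of `R^j`. -/
theorem gray_code_biclique {α : Type*} [DecidableEq α] (d t : ℕ)
    (S : ℕ → Finset α)
    (hord : ∀ i j, i < d → j < d → i + 2 ≤ j → S i ∩ S j = ∅)
    (h : ℕ → Fin t → Bool) (hg : IsGrayCode d t h)
    (j : Fin t) (u v : α)
    (hu : u ∈ Lset d t S h j) (hv : v ∈ Rset d t S h j) :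
    ∀ i, i < d → ¬ (u ∈ S i ∧ v ∈ S i) :=
  gray_code_biclique_general d t S h j u v hu hv
end

section
/- Let 𝒮 = {S^i}_{i=1}^d be a generalized 1D-ordered family and {h^i}_{i=1}^d ⊆ {0,1}^t a Gray code. Define L^j, R^j as the sets of elements lying only in pieces indexed where h_j = 0 (respectively only where h_j = 1). Then the bicliques {L^j, R^j}, j = 1,...,t, cover all edges of the conflict graph: for any u, v ∈ ∪_i S^i with {u,v} not contained in any single S^i, there exists j with (u ∈ L^j and v ∈ R^j) or (u ∈ R^j and v ∈ L^j). -/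
/-!
Every element `u` lies only in pieces indexed by two consecutive numbers `a₁ ≤ a₂ ≤ a₁ + 1`, so
the Gray code words `h a₁` and `h a₂` differ in at most one coordinate; likewise for `v` with
indices `b₁ ≤ b₂`. If `u` and `v` conflict, the four words are pairwise distinct, and then some
coordinate `j` is constant on each pair but takes different values on the two pairs. Such a `j` puts
`u` and `v` on opposite sides of the biclique `{L^j, R^j}`.
-/

open Finset

section HammingPairs

variable {ι : Type*} [Fintype ι]

theorem eq_of_ne_of_ne_of_hammingDist_le_one {e₁ e₂ : ι → Bool} (he : hammingDist e₁ e₂ ≤ 1)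
    {i j : ι} (hi : e₁ i ≠ e₂ i) (hj : e₁ j ≠ e₂ j) : i = j :=
  Finset.card_le_one.mp he i (by simpa using hi) j (by simpa using hj)

theorem exists_mem_pair_eq_on_ne_of_hammingDist_le_one {e₁ e₂ : ι → Bool}
    (he : hammingDist e₁ e₂ ≤ 1) (g : ι → Bool) :
    ∃ e ∈ ({e₁, e₂} : Set (ι → Bool)), ∀ j, e₁ j ≠ e₂ j → e j = g j := by
  by_cases hp : ∃ p, e₁ p ≠ e₂ p
  · obtain ⟨p, hp⟩ := hp
    by_cases h₁ : e₁ p = g p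
    · refine ⟨e₁, Set.mem_insert _ _, fun j hj => ?_⟩
      rwa [eq_of_ne_of_ne_of_hammingDist_le_one he hj hp]
    · refine ⟨e₂, Set.mem_insert_of_mem _ rfl, fun j hj => ?_⟩
      rw [eq_of_ne_of_ne_of_hammingDist_le_one he hj hp]
      revert hp h₁
      cases e₁ p <;> cases e₂ p <;> cases g p <;> decide
  · push Not at hp
    exact ⟨e₁, Set.mem_insert _ _, fun j hj => absurd (hp j) hj⟩

/-- If no coordinate separated the pairs, the word `e` of the first pair matching `f₁` at the
exceptional coordinate of `e₁, e₂` and the word `f` of the second pair matching `e` at the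
exceptional coordinate of `f₁, f₂` would coincide. -/
theorem exists_coord_separating_pairs {e₁ e₂ f₁ f₂ : ι → Bool}
    (he : hammingDist e₁ e₂ ≤ 1) (hf : hammingDist f₁ f₂ ≤ 1)
    (hne : ∀ e ∈ ({e₁, e₂} : Set (ι → Bool)), ∀ f ∈ ({f₁, f₂} : Set (ι → Bool)), e ≠ f) :
    ∃ j, e₁ j = e₂ j ∧ f₁ j = f₂ j ∧ e₁ j ≠ f₁ j := by
  by_contra! hsep
  obtain ⟨e, he_mem, he_fix⟩ := exists_mem_pair_eq_on_ne_of_hammingDist_le_one he f₁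
  obtain ⟨f, hf_mem, hf_fix⟩ := exists_mem_pair_eq_on_ne_of_hammingDist_le_one hf e
  refine hne e he_mem f hf_mem (funext fun j => ?_)
  by_cases hfj : f₁ j = f₂ j
  · have hf_eq : f j = f₁ j := by rcases hf_mem with rfl | rfl <;> simp [hfj]
    by_cases hej : e₁ j = e₂ j
    · have he_eq : e j = e₁ j := by rcases he_mem with rfl | rfl <;> simp [hej]
      rw [he_eq, hf_eq, hsep j hej hfj]
    · rw [he_fix j hej, hf_eq]
  · exact (hf_fix j hfj).symm

end HammingPairs

theorem IsGrayCode.hammingDist_le_one {d t : ℕ} {h : ℕ → Fin t → Bool} (hg : IsGrayCode d t h)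
    {a₁ a₂ : ℕ} (h₁₂ : a₁ ≤ a₂) (h₂₁ : a₂ ≤ a₁ + 1) (hd : a₂ < d) :
    hammingDist (h a₁) (h a₂) ≤ 1 := by
  obtain rfl | rfl : a₂ = a₁ ∨ a₂ = a₁ + 1 := by omega
  · simp
  · exact (hg.2 a₁ hd).le

section Bicliques

variable {α : Type*} [DecidableEq α] {d t : ℕ} {S : ℕ → Finset α} {h : ℕ → Fin t → Bool}
  {j : Fin t} {u v : α}

theorem mem_Lset_iff :
    u ∈ Lset d t S h j ↔
      u ∈ (range d).biUnion S ∧ ∀ i < d, u ∈ S i → h i j = false := by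
  simp only [Lset, mem_sdiff, mem_biUnion, mem_filter, mem_range, not_exists, not_and,
    and_imp]
  constructor
  · rintro ⟨⟨i, ⟨hi, -⟩, hui⟩, hnot⟩
    exact ⟨⟨i, hi, hui⟩, fun k hk huk => by simpa using mt (hnot k hk) (not_not.mpr huk)⟩
  · rintro ⟨⟨i, hi, hui⟩, hall⟩
    exact ⟨⟨i, ⟨hi, hall i hi hui⟩, hui⟩, fun k hk hkt huk => by simp_all⟩

theorem mem_Rset_iff :
    u ∈ Rset d t S h j ↔
      u ∈ (range d).biUnion S ∧ ∀ i < d, u ∈ S i → h i j = true := by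
  simp only [Rset, mem_sdiff, mem_biUnion, mem_filter, mem_range, not_exists, not_and,
    and_imp]
  constructor
  · rintro ⟨⟨i, ⟨hi, -⟩, hui⟩, hnot⟩
    exact ⟨⟨i, hi, hui⟩, fun k hk huk => by simpa using mt (hnot k hk) (not_not.mpr huk)⟩
  · rintro ⟨⟨i, hi, hui⟩, hall⟩
    exact ⟨⟨i, ⟨hi, hall i hi hui⟩, hui⟩, fun k hk hkt huk => by simp_all⟩

theorem separated_of_coord_const (hu : u ∈ (range d).biUnion S)
    (hv : v ∈ (range d).biUnion S) (b : Bool) (hub : ∀ i < d, u ∈ S i → h i j = b)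
    (hvb : ∀ i < d, v ∈ S i → h i j ≠ b) :
    (u ∈ Lset d t S h j ∧ v ∈ Rset d t S h j) ∨
      (u ∈ Rset d t S h j ∧ v ∈ Lset d t S h j) := by
  simp only [mem_Lset_iff, mem_Rset_iff]
  cases b
  · exact Or.inl ⟨⟨hu, hub⟩, hv, fun i hi hvi => by simpa using hvb i hi hvi⟩
  · exact Or.inr ⟨⟨hu, hub⟩, hv, fun i hi hvi => by simpa using hvb i hi hvi⟩

end Bicliques

theorem exists_consecutive_pieces {α : Type*} [DecidableEq α] {d : ℕ} {S : ℕ → Finset α}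
    (hord : ∀ i j, i < d → j < d → i + 2 ≤ j → S i ∩ S j = ∅) {u : α}
    (hu : u ∈ (range d).biUnion S) :
    ∃ a₁ a₂, a₁ ≤ a₂ ∧ a₂ ≤ a₁ + 1 ∧ a₂ < d ∧ u ∈ S a₁ ∧ u ∈ S a₂ ∧
      ∀ i < d, u ∈ S i → i = a₁ ∨ i = a₂ := by
  set I := (range d).filter fun i => u ∈ S i
  have hI : I.Nonempty := by simpa [I, Finset.Nonempty] using hu
  have hmin := mem_filter.mp (I.min'_mem hI)
  have hmax := mem_filter.mp (I.max'_mem hI)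
  have hmem : ∀ i < d, u ∈ S i → i ∈ I := fun i hi hui => mem_filter.mpr ⟨mem_range.mpr hi, hui⟩
  have hspan : I.max' hI ≤ I.min' hI + 1 := by
    by_contra! hfar
    have hdisj := hord _ _ (mem_range.mp hmin.1) (mem_range.mp hmax.1) hfar
    exact (Finset.disjoint_iff_inter_eq_empty.mpr hdisj).notMem_of_mem_left_finset hmin.2 hmax.2
  refine ⟨_, _, I.min'_le _ (I.max'_mem hI), hspan, mem_range.mp hmax.1, hmin.2, hmax.2,
    fun i hi hui => ?_⟩
  have := I.min'_le i (hmem i hi hui)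
  have := I.le_max' i (hmem i hi hui)
  omega

theorem gray_code_biclique_cover_general {α : Type*} [DecidableEq α] (d t : ℕ)
    (S : ℕ → Finset α)
    (hord : ∀ i j, i < d → j < d → i + 2 ≤ j → S i ∩ S j = ∅)
    (h : ℕ → Fin t → Bool) (hg : IsGrayCode d t h)
    (u v : α) (hu : u ∈ (Finset.range d).biUnion S)
    (hv : v ∈ (Finset.range d).biUnion S)
    (hconf : ∀ i, i < d → ¬ (u ∈ S i ∧ v ∈ S i)) :
    ∃ j : Fin t, (u ∈ Lset d t S h j ∧ v ∈ Rset d t S h j) ∨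
      (u ∈ Rset d t S h j ∧ v ∈ Lset d t S h j) := by
  obtain ⟨a₁, a₂, ha₁₂, ha₂₁, ha₂, hua₁, hua₂, hua⟩ := exists_consecutive_pieces hord hu
  obtain ⟨b₁, b₂, hb₁₂, hb₂₁, hb₂, hvb₁, hvb₂, hvb⟩ := exists_consecutive_pieces hord hv
  have hword_ne : ∀ a < d, u ∈ S a → ∀ b < d, v ∈ S b → h a ≠ h b :=
    fun a ha hua b hb hvb => hg.1 a b ha hb (by rintro rfl; exact hconf a ha ⟨hua, hvb⟩)
  obtain ⟨j, hja, hjb, hjab⟩ := exists_coord_separating_pairs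
    (hg.hammingDist_le_one ha₁₂ ha₂₁ ha₂) (hg.hammingDist_le_one hb₁₂ hb₂₁ hb₂)
    (by rintro _ (rfl | rfl) _ (rfl | rfl) <;> apply hword_ne <;> first | assumption | omega)
  refine ⟨j, separated_of_coord_const hu hv (h a₁ j) (fun i hi hui => ?_) (fun i hi hvi => ?_)⟩
  · rcases hua i hi hui with rfl | rfl <;> simp [hja]
  · rcases hvb i hi hvi with rfl | rfl
    exacts [hjab.symm, hjb ▸ hjab.symm]

/-- For a generalized 1D-ordered family and a Gray code, the bicliques
`{L^j, R^j}` cover all edges of the conflict graph: any conflicting pair `u, v` is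
separated by some coordinate `j`. -/
theorem gray_code_biclique_cover {α : Type*} [DecidableEq α] (d t : ℕ)
    (S : ℕ → Finset α)
    (hord : ∀ i j, i < d → j < d → i + 2 ≤ j → S i ∩ S j = ∅)
    (h : ℕ → Fin t → Bool) (hg : IsGrayCode d t h)
    (u v : α) (hu : u ∈ (Finset.range d).biUnion S)
    (hv : v ∈ (Finset.range d).biUnion S) (huv : u ≠ v)
    (hconf : ∀ i, i < d → ¬ (u ∈ S i ∧ v ∈ S i)) :
    ∃ j : Fin t, (u ∈ Lset d t S h j ∧ v ∈ Rset d t S h j) ∨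
      (u ∈ Rset d t S h j ∧ v ∈ Lset d t S h j) :=
  gray_code_biclique_cover_general d t S hord h hg u v hu hv hconf
end

section
/- Let 𝒮 = {S^𝐢 : 𝐢 ∈ [d₁]×···×[dₙ]} be a generalized nD-ordered family and 𝒮^j = {∪_{𝐢: 𝐢_j = k} S^𝐢}_{k=1}^{d_j} its j-th projection family. Then the edge set of the conflict graph of 𝒮 equals the union over j ∈ {1,...,n} of the edge sets of the conflict graphs of the 𝒮^j: a pair {u,w} is not contained in any S^𝐢 if and only if there exists j such that {u,w} is not contained in any member of 𝒮^j. -/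
/-- The `j`-th 1D projection family: `T^j_k = ∪ {S 𝐢 : 𝐢_j = k}`. -/
def projPiece {α : Type*} (n : ℕ) (dv : Fin n → ℕ) (S : (Fin n → ℕ) → Set α)
    (j : Fin n) (k : ℕ) : Set α :=
  {a | ∃ i, InGrid n dv i ∧ i j = k ∧ a ∈ S i}

open Set

/-- In a product of chains `uIcc x y` is the coordinate box spanned by `x` and `y`. -/
def UIccClosed {α : Type*} [Lattice α] (s : Set α) : Prop :=
  ∀ ⦃x⦄, x ∈ s → ∀ ⦃y⦄, y ∈ s → uIcc x y ⊆ s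

theorem UIccClosed.mem_of_forall_exists_apply_eq {ι : Type*} [Fintype ι] [DecidableEq ι]
    {β : ι → Type*} [∀ j, Lattice (β j)] {s : Set (∀ j, β j)} (hs : UIccClosed s)
    (hne : s.Nonempty) {k : ∀ j, β j} (hk : ∀ j, ∃ x ∈ s, x j = k j) : k ∈ s := by
  suffices h : ∀ t : Finset ι, ∃ x ∈ s, ∀ j ∈ t, x j = k j by
    obtain ⟨x, hx, hxk⟩ := h Finset.univ
    rwa [← funext fun j => hxk j (Finset.mem_univ j)]
  intro t
  -- fix the coordinates of `k` one at a time, each time moving inside a box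
  induction t using Finset.induction_on with
  | empty => exact hne.imp fun x hx => ⟨hx, by simp⟩
  | insert j t _ ih =>
    obtain ⟨x, hx, hxk⟩ := ih
    obtain ⟨y, hy, hyk⟩ := hk j
    refine ⟨Function.update x j (k j), hs hx hy ⟨fun m => ?_, fun m => ?_⟩, fun m hm => ?_⟩
    · rcases eq_or_ne m j with rfl | hmj
      · simp [← hyk]
      · simp [hmj]
    · rcases eq_or_ne m j with rfl | hmj
      · simp [← hyk]
      · simp [hmj]
    · rcases eq_or_ne m j with rfl | hmj
      · simp
      · simpa [hmj] using hxk m (by simpa [hmj] using hm)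

theorem uIccClosed_Icc {α : Type*} [Lattice α] (a b : α) : UIccClosed (Icc a b) :=
  fun _ hx _ hy => Icc_subset_Icc (le_inf hx.1 hy.1) (sup_le hx.2 hy.2)

theorem inGrid_iff_mem_Icc {n : ℕ} {dv v : Fin n → ℕ} : InGrid n dv v ↔ v ∈ Icc 1 dv :=
  forall_and

theorem l1dist_add_l1dist_of_mem_uIcc {n : ℕ} {a b v : Fin n → ℕ} (hv : v ∈ uIcc a b) :
    l1dist n a v + l1dist n v b = l1dist n a b := by
  rw [l1dist, l1dist, l1dist, ← Finset.sum_add_distrib]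
  refine Finset.sum_congr rfl fun m _ => ?_
  have h₁ : min (a m) (b m) ≤ v m := hv.1 m
  have h₂ : v m ≤ max (a m) (b m) := hv.2 m
  omega

section GridSupport

variable {α : Type*} {n : ℕ} {dv : Fin n → ℕ} {S : (Fin n → ℕ) → Set α}

def gridSupport (n : ℕ) (dv : Fin n → ℕ) (S : (Fin n → ℕ) → Set α) (a : α) :
    Set (Fin n → ℕ) :=
  {i | InGrid n dv i ∧ a ∈ S i}

theorem mem_projPiece_iff {a : α} {j : Fin n} {k : ℕ} :
    a ∈ projPiece n dv S j k ↔ ∃ i ∈ gridSupport n dv S a, i j = k :=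
  ⟨fun ⟨i, hi, hij, hai⟩ => ⟨i, ⟨hi, hai⟩, hij⟩,
    fun ⟨i, ⟨hi, hai⟩, hij⟩ => ⟨i, hi, hij, hai⟩⟩

theorem uIccClosed_gridSupport
    (h2 : ∀ i j v, InGrid n dv i → InGrid n dv j → InGrid n dv v →
      l1dist n i v + l1dist n v j = l1dist n i j → S i ∩ S j ⊆ S v) (a : α) :
    UIccClosed (gridSupport n dv S a) := by
  intro x hx y hy v hv
  have hgrid : InGrid n dv v := inGrid_iff_mem_Icc.2 <|
    uIccClosed_Icc 1 dv (inGrid_iff_mem_Icc.1 hx.1) (inGrid_iff_mem_Icc.1 hy.1) hv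
  exact ⟨hgrid, h2 x y v hx.1 hy.1 hgrid (l1dist_add_l1dist_of_mem_uIcc hv) ⟨hx.2, hy.2⟩⟩

end GridSupport

theorem conflict_graph_eq_union_proj_general {α : Type*} (n : ℕ) (dv : Fin n → ℕ)
    (S : (Fin n → ℕ) → Set α)
    (h2 : ∀ i j v, InGrid n dv i → InGrid n dv j → InGrid n dv v →
      l1dist n i v + l1dist n v j = l1dist n i j → S i ∩ S j ⊆ S v)
    (u w : α)
    (hu : ∃ i, InGrid n dv i ∧ u ∈ S i) (hw : ∃ i, InGrid n dv i ∧ w ∈ S i) :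
    (∀ i, InGrid n dv i → ¬ (u ∈ S i ∧ w ∈ S i)) ↔
      ∃ j : Fin n, ∀ k, 1 ≤ k → k ≤ dv j →
        ¬ (u ∈ projPiece n dv S j k ∧ w ∈ projPiece n dv S j k) := by
  constructor
  · intro hnone
    by_contra! hpieces
    choose k _ _ hku hkw using hpieces
    have hU : k ∈ gridSupport n dv S u :=
      (uIccClosed_gridSupport h2 u).mem_of_forall_exists_apply_eq hu
        fun j => mem_projPiece_iff.1 (hku j)
    have hW : k ∈ gridSupport n dv S w :=
      (uIccClosed_gridSupport h2 w).mem_of_forall_exists_apply_eq hw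
        fun j => mem_projPiece_iff.1 (hkw j)
    exact hnone k hU.1 ⟨hU.2, hW.2⟩
  · rintro ⟨j, hj⟩ i hi ⟨hui, hwi⟩
    exact hj (i j) (hi j).1 (hi j).2 ⟨⟨i, hi, rfl, hui⟩, ⟨i, hi, rfl, hwi⟩⟩

/-- For a generalized nD-ordered family, the edge set of the conflict graph equals
the union of the edge sets of the conflict graphs of the 1D projection families:
a pair `{u, w}` of distinct ground-set elements is contained in no `S 𝐢` iff for some
coordinate `j` it is contained in no member `T^j_k` of the projection family. -/
theorem conflict_graph_eq_union_proj {α : Type*} (n : ℕ) (dv : Fin n → ℕ)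
    (S : (Fin n → ℕ) → Set α)
    (h1 : ∀ i j, InGrid n dv i → InGrid n dv j →
      (∃ k, 2 ≤ ((i k : ℤ) - (j k : ℤ)).natAbs) → S i ∩ S j = ∅)
    (h2 : ∀ i j v, InGrid n dv i → InGrid n dv j → InGrid n dv v →
      l1dist n i v + l1dist n v j = l1dist n i j → S i ∩ S j ⊆ S v)
    (u w : α) (huw : u ≠ w)
    (hu : ∃ i, InGrid n dv i ∧ u ∈ S i) (hw : ∃ i, InGrid n dv i ∧ w ∈ S i) :
    (∀ i, InGrid n dv i → ¬ (u ∈ S i ∧ w ∈ S i)) ↔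
      ∃ j : Fin n, ∀ k, 1 ≤ k → k ≤ dv j →
        ¬ (u ∈ projPiece n dv S j k ∧ w ∈ projPiece n dv S j k) :=
  conflict_graph_eq_union_proj_general n dv S h2 u w hu hw
end

section
/- Let 𝒮 = {S^𝐢 : 𝐢 ∈ [d₁]×···×[dₙ]} be a generalized nD-ordered family. For any element u ∈ ∪𝒮, the index set 𝐈^u = {𝐢 : u ∈ S^𝐢} is a product: 𝐈^u = 𝐈^u_1 × ··· × 𝐈^u_n, where 𝐈^u_j = {𝐢_j : u ∈ S^𝐢}. -/
open Function

lemma InGrid.update {n : ℕ} {dv a b : Fin n → ℕ} (ha : InGrid n dv a) (hb : InGrid n dv b)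
    (j : Fin n) : InGrid n dv (update a j (b j)) := by
  intro k
  rcases eq_or_ne k j with rfl | hk
  · simpa using hb k
  · simpa [hk] using ha k

lemma l1dist_update_add_l1dist (n : ℕ) (a b : Fin n → ℕ) (j : Fin n) :
    l1dist n a (update a j (b j)) + l1dist n (update a j (b j)) b = l1dist n a b := by
  simp only [l1dist, ← Finset.sum_add_distrib]
  refine Finset.sum_congr rfl fun k _ => ?_
  rcases eq_or_ne k j with rfl | hk <;> simp [*]

section BetweenClosed

variable {α : Type*} {n : ℕ} {dv : Fin n → ℕ} {S : (Fin n → ℕ) → Set α}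

lemma mem_update_of_between_closed
    (h2 : ∀ i j v, InGrid n dv i → InGrid n dv j → InGrid n dv v →
      l1dist n i v + l1dist n v j = l1dist n i j → S i ∩ S j ⊆ S v)
    {u : α} {w w' : Fin n → ℕ} (hw : InGrid n dv w) (hw' : InGrid n dv w')
    (hu : u ∈ S w) (hu' : u ∈ S w') (j : Fin n) : u ∈ S (update w j (w' j)) :=
  h2 w w' _ hw hw' (hw.update hw' j) (l1dist_update_add_l1dist n w w' j) ⟨hu, hu'⟩

lemma exists_mem_eqOn_of_between_closed (hn : 0 < n)
    (h2 : ∀ i j v, InGrid n dv i → InGrid n dv j → InGrid n dv v →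
      l1dist n i v + l1dist n v j = l1dist n i j → S i ∩ S j ⊆ S v)
    {u : α} {i : Fin n → ℕ} (h : ∀ j : Fin n, ∃ i2, InGrid n dv i2 ∧ u ∈ S i2 ∧ i2 j = i j)
    (s : Finset (Fin n)) : ∃ w, InGrid n dv w ∧ u ∈ S w ∧ ∀ j ∈ s, w j = i j := by
  induction s using Finset.induction_on with
  | empty =>
    obtain ⟨w, hw, hu, -⟩ := h ⟨0, hn⟩
    exact ⟨w, hw, hu, by simp⟩
  | insert j s _ ih =>
    obtain ⟨w, hw, hu, hwi⟩ := ih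
    obtain ⟨w', hw', hu', hw'j⟩ := h j
    refine ⟨update w j (w' j), hw.update hw' j,
      mem_update_of_between_closed h2 hw hw' hu hu' j, fun k hk => ?_⟩
    rcases eq_or_ne k j with rfl | hkj
    · simpa using hw'j
    · simpa [hkj] using hwi k (Finset.mem_of_mem_insert_of_ne hk hkj)

end BetweenClosed

theorem index_set_is_product_general {α : Type*} (n : ℕ) (hn : 0 < n) (dv : Fin n → ℕ)
    (S : (Fin n → ℕ) → Set α)
    (h2 : ∀ i j v, InGrid n dv i → InGrid n dv j → InGrid n dv v →
      l1dist n i v + l1dist n v j = l1dist n i j → S i ∩ S j ⊆ S v)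
    (u : α) (i : Fin n → ℕ) (hi : InGrid n dv i) :
    u ∈ S i ↔ ∀ j : Fin n, ∃ i2, InGrid n dv i2 ∧ u ∈ S i2 ∧ i2 j = i j := by
  refine ⟨fun hu j => ⟨i, hi, hu, rfl⟩, fun h => ?_⟩
  obtain ⟨w, -, hu, hwi⟩ := exists_mem_eqOn_of_between_closed hn h2 h Finset.univ
  rwa [funext fun j => hwi j (Finset.mem_univ j)] at hu

/-- For a generalized nD-ordered family, the index set `𝐈^u = {𝐢 : u ∈ S 𝐢}` is a
product of its coordinate projections: a grid index `𝐢` satisfies `u ∈ S 𝐢` iff for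
each coordinate `j` there is a grid index `𝐣` with `u ∈ S 𝐣` and `𝐣_j = 𝐢_j`. -/
theorem index_set_is_product {α : Type*} (n : ℕ) (hn : 0 < n) (dv : Fin n → ℕ)
    (S : (Fin n → ℕ) → Set α)
    (h1 : ∀ i j, InGrid n dv i → InGrid n dv j →
      (∃ k, 2 ≤ ((i k : ℤ) - (j k : ℤ)).natAbs) → S i ∩ S j = ∅)
    (h2 : ∀ i j v, InGrid n dv i → InGrid n dv j → InGrid n dv v →
      l1dist n i v + l1dist n v j = l1dist n i j → S i ∩ S j ⊆ S v)
    (u : α) (i : Fin n → ℕ) (hi : InGrid n dv i) :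
    u ∈ S i ↔ ∀ j : Fin n, ∃ i2, InGrid n dv i2 ∧ u ∈ S i2 ∧ i2 j = i j :=
  index_set_is_product_general n hn dv S h2 u i hi
end

section
/- Let {h^i}_{i=1}^d be a Gray code in {0,1}^t for a generalized 1D-ordered family 𝒮 = {S^i}_{i=1}^d, with X^i = S^i \ ∪_{j≠i} S^j and Y^i = S^i ∩ S^{i+1}. Then with L^j, R^j as in the Gray code biclique construction: X^i ⊆ L^j if and only if h^i_j = 0, X^i ⊆ R^j if and only if h^i_j = 1, Y^i ⊆ L^j if and only if h^i_j = h^{i+1}_j = 0, and Y^i ⊆ R^j if and only if h^i_j = h^{i+1}_j = 1. -/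
/-- `X^i`: elements of `S i` lying in no other piece. -/
def Xset {α : Type*} [DecidableEq α] (d : ℕ) (S : ℕ → Finset α) (i : ℕ) : Finset α :=
  S i \ ((Finset.range d).filter (· ≠ i)).biUnion S

/-- `Y^i = S^i ∩ S^{i+1}`. -/
def Yset {α : Type*} [DecidableEq α] (S : ℕ → Finset α) (i : ℕ) : Finset α :=
  S i ∩ S (i + 1)

/-!
Colour the pieces `S 0, …, S (d-1)` by the bit `c k = h^k_j`; `L^j` and `R^j` are the points covered by
pieces of one colour and by none of the other. A point `y` lies in exactly the pieces indexed by
a nonempty set `P` (for `X^i`, `P = {i}`; for `Y^i`, `P = {i, i+1}` by the 1D-ordering), so `y` is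
on side `b` iff every piece in `P` has colour `b`. This condition does not depend on `y`, so a
nonempty `X^i` or `Y^i` lies on side `b` iff the pieces in its `P` all have colour `b`.
-/

open Finset

section Sides

variable {α : Type*} [DecidableEq α] {d : ℕ} {S : ℕ → Finset α}

def side (d : ℕ) (S : ℕ → Finset α) (c : ℕ → Bool) (b : Bool) : Finset α :=
  ((range d).filter (c · = b)).biUnion S \ ((range d).filter (c · = !b)).biUnion S

theorem Lset_eq_side (t : ℕ) (h : ℕ → Fin t → Bool) (j : Fin t) :
    Lset d t S h j = side d S (h · j) false := rfl

theorem Rset_eq_side (t : ℕ) (h : ℕ → Fin t → Bool) (j : Fin t) :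
    Rset d t S h j = side d S (h · j) true := rfl

theorem mem_side_iff {c : ℕ → Bool} {b : Bool} {P : Finset ℕ} {y : α} (hP : P.Nonempty)
    (hy : ∀ k, k ∈ P ↔ k < d ∧ y ∈ S k) :
    y ∈ side d S c b ↔ ∀ k ∈ P, c k = b := by
  have hcover : ∀ b', (∃ k ∈ (range d).filter (c · = b'), y ∈ S k) ↔ ∃ k ∈ P, c k = b' := by
    intro b'
    simp only [mem_filter, mem_range, hy]
    exact ⟨fun ⟨k, ⟨hk, hck⟩, hyk⟩ => ⟨k, ⟨hk, hyk⟩, hck⟩,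
      fun ⟨k, ⟨hk, hyk⟩, hck⟩ => ⟨k, ⟨hk, hck⟩, hyk⟩⟩
  rw [side, mem_sdiff, mem_biUnion, mem_biUnion, hcover, hcover]
  obtain ⟨k₀, hk₀⟩ := hP
  constructor
  · rintro ⟨-, hnot⟩ k hk
    by_contra hck
    exact hnot ⟨k, hk, Bool.eq_not_iff.2 hck⟩
  · intro hall
    refine ⟨⟨k₀, hk₀, hall k₀ hk₀⟩, ?_⟩
    rintro ⟨k, hk, hck⟩
    exact Bool.eq_not_iff.1 hck (hall k hk)

theorem subset_side_iff {c : ℕ → Bool} {b : Bool} {P : Finset ℕ} {A : Finset α}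
    (hA : A.Nonempty) (hP : P.Nonempty) (hpieces : ∀ y ∈ A, ∀ k, k ∈ P ↔ k < d ∧ y ∈ S k) :
    A ⊆ side d S c b ↔ ∀ k ∈ P, c k = b := by
  obtain ⟨x, hx⟩ := hA
  refine ⟨fun hsub => (mem_side_iff hP (hpieces x hx)).1 (hsub hx), fun hall y hy => ?_⟩
  exact (mem_side_iff hP (hpieces y hy)).2 hall

theorem pieces_of_mem_Xset {i : ℕ} (hi : i < d) {y : α} (hy : y ∈ Xset d S i) (k : ℕ) :
    k ∈ ({i} : Finset ℕ) ↔ k < d ∧ y ∈ S k := by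
  simp only [Xset, mem_sdiff, mem_biUnion, mem_filter, mem_range, not_exists, not_and] at hy
  rw [mem_singleton]
  constructor
  · rintro rfl
    exact ⟨hi, hy.1⟩
  · rintro ⟨hk, hyk⟩
    by_contra hki
    exact hy.2 k ⟨hk, hki⟩ hyk

theorem pieces_of_mem_Yset (hord : ∀ i j, i < d → j < d → i + 2 ≤ j → S i ∩ S j = ∅)
    {i : ℕ} (hi : i + 1 < d) {y : α} (hy : y ∈ Yset S i) (k : ℕ) :
    k ∈ ({i, i + 1} : Finset ℕ) ↔ k < d ∧ y ∈ S k := by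
  rw [Yset, mem_inter] at hy
  have hnot : ∀ a b, a < d → b < d → a + 2 ≤ b → y ∈ S a → y ∉ S b := fun a b ha hb hab hya hyb =>
    by simpa [hord a b ha hb hab] using mem_inter.2 ⟨hya, hyb⟩
  rw [mem_insert, mem_singleton]
  constructor
  · rintro (rfl | rfl)
    exacts [⟨by omega, hy.1⟩, ⟨hi, hy.2⟩]
  · rintro ⟨hk, hyk⟩
    by_contra hki
    rcases Nat.lt_or_ge k i with hlt | hge
    · exact hnot k (i + 1) hk hi (by omega) hyk hy.2
    · exact hnot i k (by omega) hk (by omega) hy.1 hyk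

theorem Xset_subset_side_iff {c : ℕ → Bool} {b : Bool} {i : ℕ} (hi : i < d)
    (hX : (Xset d S i).Nonempty) : Xset d S i ⊆ side d S c b ↔ c i = b := by
  simpa using subset_side_iff (c := c) (b := b) hX (singleton_nonempty i)
    fun _ hy => pieces_of_mem_Xset hi hy

theorem Yset_subset_side_iff (hord : ∀ i j, i < d → j < d → i + 2 ≤ j → S i ∩ S j = ∅)
    {c : ℕ → Bool} {b : Bool} {i : ℕ} (hi : i + 1 < d) (hY : (Yset S i).Nonempty) :
    Yset S i ⊆ side d S c b ↔ c i = b ∧ c (i + 1) = b := by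
  simpa using subset_side_iff (c := c) (b := b) hY (insert_nonempty i {i + 1})
    fun _ hy => pieces_of_mem_Yset hord hi hy

end Sides

theorem gray_code_piece_membership_general {α : Type*} [DecidableEq α] (d t : ℕ)
    (S : ℕ → Finset α)
    (hord : ∀ i j, i < d → j < d → i + 2 ≤ j → S i ∩ S j = ∅)
    (h : ℕ → Fin t → Bool)
    (hX : ∀ i, i < d → (Xset d S i).Nonempty)
    (hY : ∀ i, i + 1 < d → (Yset S i).Nonempty)
    (j : Fin t) :
    (∀ i, i < d →
      ((Xset d S i ⊆ Lset d t S h j ↔ h i j = false) ∧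
       (Xset d S i ⊆ Rset d t S h j ↔ h i j = true))) ∧
    (∀ i, i + 1 < d →
      ((Yset S i ⊆ Lset d t S h j ↔ (h i j = false ∧ h (i + 1) j = false)) ∧
       (Yset S i ⊆ Rset d t S h j ↔ (h i j = true ∧ h (i + 1) j = true)))) := by
  simp only [Lset_eq_side, Rset_eq_side]
  exact ⟨fun i hi => ⟨Xset_subset_side_iff hi (hX i hi), Xset_subset_side_iff hi (hX i hi)⟩,
    fun i hi => ⟨Yset_subset_side_iff hord hi (hY i hi), Yset_subset_side_iff hord hi (hY i hi)⟩⟩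

/-- For a generalized 1D-ordered family with nonempty `X^i` and `Y^i`:
`X^i ⊆ L^j ↔ h^i_j = 0`, `X^i ⊆ R^j ↔ h^i_j = 1`,
`Y^i ⊆ L^j ↔ h^i_j = h^{i+1}_j = 0`, `Y^i ⊆ R^j ↔ h^i_j = h^{i+1}_j = 1`. -/
theorem gray_code_piece_membership {α : Type*} [DecidableEq α] (d t : ℕ)
    (S : ℕ → Finset α)
    (hord : ∀ i j, i < d → j < d → i + 2 ≤ j → S i ∩ S j = ∅)
    (h : ℕ → Fin t → Bool) (hg : IsGrayCode d t h)
    (hX : ∀ i, i < d → (Xset d S i).Nonempty)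
    (hY : ∀ i, i + 1 < d → (Yset S i).Nonempty)
    (j : Fin t) :
    (∀ i, i < d →
      ((Xset d S i ⊆ Lset d t S h j ↔ h i j = false) ∧
       (Xset d S i ⊆ Rset d t S h j ↔ h i j = true))) ∧
    (∀ i, i + 1 < d →
      ((Yset S i ⊆ Lset d t S h j ↔ (h i j = false ∧ h (i + 1) j = false)) ∧
       (Yset S i ⊆ Rset d t S h j ↔ (h i j = true ∧ h (i + 1) j = true)))) :=
  gray_code_piece_membership_general d t S hord h hX hY j
end
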